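/- arXiv:2310.03910 — 5 statements merged into one kernel-verified Lean document; each statement's English description precedes it below -/
import Mathlib

section
/- Let P(x,y) = (1/2)x² − (1/2)y² + (2+√3)xy be a real 2-homogeneous polynomial on ℝ² with the ℓ¹ norm. Then the supremum norm of P on the closed unit ball of ℓ¹₂ equals 1. -/
/-- The supremum norm of P(x,y) = (1/2)x² − (1/2)y² + (2+√3)xy on the closed
unit ball of ℓ¹₂ equals 1. -/
theorem stmt0 :
    sSup {t : ℝ | ∃ x y : ℝ, |x| + |y| ≤ 1 ∧
      t = |(1/2) * x^2 - (1/2) * y^2 + (2 + Real.sqrt 3) * (x * y)|} = 1 := by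
  have hs : Real.sqrt 3 ^ 2 = 3 := Real.sq_sqrt (by norm_num)
  have hs1 : (1:ℝ) ≤ Real.sqrt 3 := by
    nlinarith [Real.sqrt_nonneg 3]
  have hs2 : Real.sqrt 3 ≤ 2 := by
    nlinarith [Real.sqrt_nonneg 3]
  apply IsGreatest.csSup_eq
  constructor
  · refine ⟨(3 - Real.sqrt 3)/2, (Real.sqrt 3 - 1)/2, ?_, ?_⟩
    · rw [abs_of_nonneg (by linarith), abs_of_nonneg (by linarith)]
      ring_nf
      linarith
    · rw [eq_comm, abs_eq (by norm_num)]
      left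
      nlinarith [hs]
  · rintro t ⟨x, y, h, rfl⟩
    have hx : |x| ^ 2 = x ^ 2 := sq_abs x
    have hy : |y| ^ 2 = y ^ 2 := sq_abs y
    have hxy : x * y ≤ |x| * |y| := by
      calc x * y ≤ |x * y| := le_abs_self _
      _ = |x| * |y| := abs_mul x y
    have hxy' : -(|x| * |y|) ≤ x * y := by
      have := neg_abs_le (x * y)
      rwa [abs_mul] at this
    rw [abs_le]
    constructor
    · nlinarith [sq_nonneg (|x| - Real.sqrt 3 * |y|), sq_nonneg (|y| - Real.sqrt 3 * |x|),
        abs_nonneg x, abs_nonneg y]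
    · nlinarith [sq_nonneg (|x| - Real.sqrt 3 * |y|), sq_nonneg (|y| - Real.sqrt 3 * |x|),
        abs_nonneg x, abs_nonneg y]
end

section
/- Let |P|(x,y) = (1/2)x² + (1/2)y² + (2+√3)xy on ℝ² with the ℓ¹ norm. Then sup{| |P|(x,y) | : |x|+|y| ≤ 1} = (3+√3)/4, and in particular this supremum is strictly greater than 1. -/
lemma stmt1_bound (x y : ℝ) (hxy : |x| + |y| ≤ 1) :
    |(1/2) * x^2 + (1/2) * y^2 + (2 + Real.sqrt 3) * (x * y)|
      ≤ (3 + Real.sqrt 3) / 4 := by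
  have hs : Real.sqrt 3 ^ 2 = 3 := Real.sq_sqrt (by norm_num)
  have hs0 : (0:ℝ) ≤ Real.sqrt 3 := Real.sqrt_nonneg 3
  have ha : (0:ℝ) ≤ |x| := abs_nonneg x
  have hb : (0:ℝ) ≤ |y| := abs_nonneg y
  have hsq : (|x| + |y|)^2 ≤ 1 := by nlinarith
  have h1 : (0:ℝ) ≤ 1 - (|x| + |y|)^2 := by linarith
  have hxa : x^2 = |x|^2 := (sq_abs x).symm
  have hyb : y^2 = |y|^2 := (sq_abs y).symm
  have hub : x * y ≤ |x| * |y| := (le_abs_self _).trans (abs_mul x y).le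
  have hlb : -(|x| * |y|) ≤ x * y := by
    have := neg_abs_le (x * y); rwa [abs_mul] at this
  rw [abs_le]
  constructor
  · nlinarith [mul_nonneg hs0 (sq_nonneg (|x| - |y|)), sq_nonneg (|x| - |y|),
      mul_nonneg hs0 h1]
  · nlinarith [mul_nonneg hs0 (sq_nonneg (|x| - |y|)), sq_nonneg (|x| - |y|),
      mul_nonneg hs0 h1]

/-- The supremum of |P|(x,y) = (1/2)x² + (1/2)y² + (2+√3)xy over the closed
unit ball of ℓ¹₂ equals (3+√3)/4, which is strictly greater than 1. -/
theorem stmt1 :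
    sSup {t : ℝ | ∃ x y : ℝ, |x| + |y| ≤ 1 ∧
      t = |(1/2) * x^2 + (1/2) * y^2 + (2 + Real.sqrt 3) * (x * y)|}
      = (3 + Real.sqrt 3) / 4 ∧ 1 < (3 + Real.sqrt 3) / 4 := by
  have hs : Real.sqrt 3 ^ 2 = 3 := Real.sq_sqrt (by norm_num)
  have hs0 : (0:ℝ) ≤ Real.sqrt 3 := Real.sqrt_nonneg 3
  have hs1 : 1 < Real.sqrt 3 := by nlinarith
  have hmem : (3 + Real.sqrt 3) / 4 ∈ {t : ℝ | ∃ x y : ℝ, |x| + |y| ≤ 1 ∧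
      t = |(1/2) * x^2 + (1/2) * y^2 + (2 + Real.sqrt 3) * (x * y)|} := by
    refine ⟨1/2, 1/2, ?_, ?_⟩
    · rw [show |(1/2:ℝ)| = 1/2 from abs_of_nonneg (by norm_num)]; norm_num
    · rw [abs_of_nonneg (by positivity)]
      ring
  constructor
  · apply le_antisymm
    · apply csSup_le ⟨_, hmem⟩
      rintro t ⟨x, y, hxy, rfl⟩
      exact stmt1_bound x y hxy
    · apply le_csSup _ hmem
      exact ⟨(3 + Real.sqrt 3) / 4, by rintro t ⟨x, y, hxy, rfl⟩; exact stmt1_bound x y hxy⟩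
  · linarith
end

section
/- Let a, b, c be real numbers with |a| < 1, |b| < 1, and 2 < |c| ≤ 4, and let P(x,y) = ax² + by² + cxy on ℝ² with the ℓ¹ norm. Then sup{|P(x,y)| : |x|+|y| ≤ 1} = 1 if and only if 4|c| − c² = 4(|a+b| − ab). -/
set_option maxHeartbeats 800000 in
/-- Choi–Kim–Ki: for |a|<1, |b|<1, 2<|c|≤4, the polynomial ax²+by²+cxy has
supremum norm 1 on the unit ball of ℓ¹₂ iff 4|c|−c² = 4(|a+b|−ab). -/
theorem stmt2 (a b c : ℝ) (ha : |a| < 1) (hb : |b| < 1)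
    (hc1 : 2 < |c|) (hc2 : |c| ≤ 4) :
    sSup {t : ℝ | ∃ x y : ℝ, |x| + |y| ≤ 1 ∧
      t = |a * x^2 + b * y^2 + c * (x * y)|} = 1 ↔
    4 * |c| - c^2 = 4 * (|a + b| - a * b) := by
  set d := |c| with hd_def
  have hdc : d ^ 2 = c ^ 2 := sq_abs c
  have hA : a ≤ |a| := le_abs_self a
  have hA' : -a ≤ |a| := neg_le_abs a
  have hB : b ≤ |b| := le_abs_self b
  have hB' : -b ≤ |b| := neg_le_abs b
  have hab : |a + b| < 2 := lt_of_le_of_lt (abs_add_le a b) (by linarith)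
  have habp : a + b ≤ |a + b| := le_abs_self _
  have habn : -(a + b) ≤ |a + b| := neg_le_abs _
  have hden : 0 < d - |a + b| := by linarith
  have hden1 : 0 < d - a - b := by linarith
  have hden2 : 0 < d + a + b := by linarith
  have habmul : a * b ≤ |a| * |b| := by
    calc a * b ≤ |a * b| := le_abs_self _
    _ = |a| * |b| := abs_mul a b
  have hN : 0 < d ^ 2 - 4 * (a * b) := by
    nlinarith [abs_nonneg a, abs_nonneg b]
  set F := (d ^ 2 - 4 * (a * b)) / (4 * (d - |a + b|)) with hFdef
  have hFpos : 0 < F := div_pos hN (by linarith)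
  have hFeq : 4 * (d - |a + b|) * F = d ^ 2 - 4 * (a * b) := by
    rw [hFdef]; field_simp
  set M := max (max |a| |b|) F with hMdef
  have hMa : |a| ≤ M := le_trans (le_max_left _ _) (le_max_left _ _)
  have hMb : |b| ≤ M := le_trans (le_max_right _ _) (le_max_left _ _)
  have hMF : F ≤ M := le_max_right _ _
  -- upper bound
  have hub : ∀ x y : ℝ, |x| + |y| ≤ 1 →
      |a * x^2 + b * y^2 + c * (x * y)| ≤ M := by
    intro x y hxy
    set s := |x| with hs_def
    set u := |y| with hu_def
    have hs : 0 ≤ s := abs_nonneg x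
    have hu : 0 ≤ u := abs_nonneg y
    have hx2 : x ^ 2 = s ^ 2 := (sq_abs x).symm
    have hy2 : y ^ 2 = u ^ 2 := (sq_abs y).symm
    have hcxy : |c * (x * y)| = d * (s * u) := by
      rw [abs_mul, abs_mul]
    have hcu : c * (x * y) ≤ d * (s * u) := hcxy ▸ le_abs_self _
    have hcl : -(d * (s * u)) ≤ c * (x * y) := hcxy ▸ neg_abs_le _
    have hsq1 : (s + u) ^ 2 ≤ 1 := by nlinarith
    rw [hx2, hy2, abs_le]
    constructor
    · -- lower bound: -M ≤ P, using Q⁻ = a s² + b u² − d s u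
      have key : 4 * (d + a + b) * (a * s ^ 2 + b * u ^ 2 - d * (s * u)) +
          (d ^ 2 - 4 * (a * b)) * (s + u) ^ 2
          = ((d + 2 * a) * s - (d + 2 * b) * u) ^ 2 := by ring
      have h1 : -((d ^ 2 - 4 * (a * b)) * (s + u) ^ 2) ≤
          4 * (d + a + b) * (a * s ^ 2 + b * u ^ 2 - d * (s * u)) := by
        have := sq_nonneg ((d + 2 * a) * s - (d + 2 * b) * u)
        linarith
      have h2 : -(d ^ 2 - 4 * (a * b)) ≤ -((d ^ 2 - 4 * (a * b)) * (s + u) ^ 2) := by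
        have := mul_le_of_le_one_right hN.le hsq1
        linarith
      have h3 : d ^ 2 - 4 * (a * b) ≤ 4 * (d + a + b) * M := by
        calc d ^ 2 - 4 * (a * b) = 4 * (d - |a + b|) * F := hFeq.symm
          _ ≤ 4 * (d + a + b) * F := by
              apply mul_le_mul_of_nonneg_right _ hFpos.le; linarith
          _ ≤ 4 * (d + a + b) * M := by
              apply mul_le_mul_of_nonneg_left hMF; linarith
      have h4 : 4 * (d + a + b) * (-M) ≤
          4 * (d + a + b) * (a * s ^ 2 + b * u ^ 2 - d * (s * u)) := by linarith
      have h5 : -M ≤ a * s ^ 2 + b * u ^ 2 - d * (s * u) :=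
        le_of_mul_le_mul_left h4 (by linarith)
      linarith [hcl]
    · -- upper bound: P ≤ M, using Q⁺ = a s² + b u² + d s u
      have key : (d ^ 2 - 4 * (a * b)) * (s + u) ^ 2 -
          4 * (d - a - b) * (a * s ^ 2 + b * u ^ 2 + d * (s * u))
          = ((d - 2 * a) * s - (d - 2 * b) * u) ^ 2 := by ring
      have h1 : 4 * (d - a - b) * (a * s ^ 2 + b * u ^ 2 + d * (s * u)) ≤
          (d ^ 2 - 4 * (a * b)) * (s + u) ^ 2 := by
        have := sq_nonneg ((d - 2 * a) * s - (d - 2 * b) * u)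
        linarith
      have h2 : (d ^ 2 - 4 * (a * b)) * (s + u) ^ 2 ≤ d ^ 2 - 4 * (a * b) :=
        mul_le_of_le_one_right hN.le hsq1
      have h3 : d ^ 2 - 4 * (a * b) ≤ 4 * (d - a - b) * M := by
        calc d ^ 2 - 4 * (a * b) = 4 * (d - |a + b|) * F := hFeq.symm
          _ ≤ 4 * (d - a - b) * F := by
              apply mul_le_mul_of_nonneg_right _ hFpos.le; linarith
          _ ≤ 4 * (d - a - b) * M := by
              apply mul_le_mul_of_nonneg_left hMF; linarith
      have h4 : 4 * (d - a - b) * (a * s ^ 2 + b * u ^ 2 + d * (s * u)) ≤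
          4 * (d - a - b) * M := by linarith
      have h5 : a * s ^ 2 + b * u ^ 2 + d * (s * u) ≤ M :=
        le_of_mul_le_mul_left h4 (by linarith)
      linarith [hcu]
  -- membership of the three candidate values
  have hmemA : |a| ∈ {t : ℝ | ∃ x y : ℝ, |x| + |y| ≤ 1 ∧
      t = |a * x^2 + b * y^2 + c * (x * y)|} := by
    refine ⟨1, 0, by norm_num, by norm_num⟩
  have hmemB : |b| ∈ {t : ℝ | ∃ x y : ℝ, |x| + |y| ≤ 1 ∧
      t = |a * x^2 + b * y^2 + c * (x * y)|} := by
    refine ⟨0, 1, by norm_num, by norm_num⟩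
  have hσ : ∃ σ : ℝ, |σ| = 1 ∧ c * σ = d := by
    rcases le_or_gt 0 c with h | h
    · exact ⟨1, by norm_num, by rw [hd_def, abs_of_nonneg h]; ring⟩
    · exact ⟨-1, by norm_num, by rw [hd_def, abs_of_neg h]; ring⟩
  obtain ⟨σ, hσ1, hσ2⟩ := hσ
  have hσsq : σ ^ 2 = 1 := by
    have : |σ| ^ 2 = 1 := by rw [hσ1]; norm_num
    rwa [sq_abs] at this
  have hmemF : F ∈ {t : ℝ | ∃ x y : ℝ, |x| + |y| ≤ 1 ∧
      t = |a * x^2 + b * y^2 + c * (x * y)|} := by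
    rcases le_or_gt 0 (a + b) with hpos | hneg
    · have habs : |a + b| = a + b := abs_of_nonneg hpos
      set t := (d - 2 * b) / (2 * (d - a - b)) with ht_def
      have ht0 : 0 ≤ t := div_nonneg (by linarith) (by linarith)
      have ht1 : t ≤ 1 := by
        rw [div_le_one (by linarith)]; linarith
      refine ⟨σ * t, 1 - t, ?_, ?_⟩
      · rw [abs_mul, hσ1, one_mul, abs_of_nonneg ht0, abs_of_nonneg (by linarith : (0:ℝ) ≤ 1 - t)]
        linarith
      · have hne2 : 4 * (d - (a + b)) ≠ 0 := ne_of_gt (by linarith)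
        have ht_mul : t * (2 * (d - a - b)) = d - 2 * b := by
          rw [ht_def]; exact div_mul_cancel₀ _ (ne_of_gt (by linarith))
        have hval : a * (σ * t)^2 + b * (1 - t)^2 + c * (σ * t * (1 - t)) = F := by
          have e1 : a * (σ * t)^2 + b * (1 - t)^2 + c * (σ * t * (1 - t))
              = a * t ^ 2 * σ ^ 2 + b * (1 - t)^2 + (c * σ) * (t * (1 - t)) := by ring
          rw [e1, hσsq, hσ2, hFdef, habs, eq_div_iff hne2]
          linear_combination (d - 2 * b - 2 * (d - a - b) * t) * ht_mul
        rw [hval, abs_of_nonneg hFpos.le]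
    · have habs : |a + b| = -(a + b) := abs_of_neg hneg
      set t := (d + 2 * b) / (2 * (d + a + b)) with ht_def
      have ht0 : 0 ≤ t := div_nonneg (by linarith) (by linarith)
      have ht1 : t ≤ 1 := by
        rw [div_le_one (by linarith)]; linarith
      refine ⟨-(σ * t), 1 - t, ?_, ?_⟩
      · rw [abs_neg, abs_mul, hσ1, one_mul, abs_of_nonneg ht0,
          abs_of_nonneg (by linarith : (0:ℝ) ≤ 1 - t)]
        linarith
      · have hne2 : 4 * (d - -(a + b)) ≠ 0 := ne_of_gt (by linarith)
        have ht_mul : t * (2 * (d + a + b)) = d + 2 * b := by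
          rw [ht_def]; exact div_mul_cancel₀ _ (ne_of_gt (by linarith))
        have hval : a * (-(σ * t))^2 + b * (1 - t)^2 + c * (-(σ * t) * (1 - t)) = -F := by
          have e1 : a * (-(σ * t))^2 + b * (1 - t)^2 + c * (-(σ * t) * (1 - t))
              = a * t ^ 2 * σ ^ 2 + b * (1 - t)^2 - (c * σ) * (t * (1 - t)) := by ring
          rw [e1, hσsq, hσ2, hFdef, habs, neg_div', eq_div_iff hne2]
          linear_combination (2 * (d + a + b) * t - (d + 2 * b)) * ht_mul
        rw [hval, abs_neg, abs_of_nonneg hFpos.le]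
  have hMmem : M ∈ {t : ℝ | ∃ x y : ℝ, |x| + |y| ≤ 1 ∧
      t = |a * x^2 + b * y^2 + c * (x * y)|} := by
    rcases max_choice (max |a| |b|) F with h | h
    · rcases max_choice |a| |b| with h' | h'
      · rw [hMdef, h, h']; exact hmemA
      · rw [hMdef, h, h']; exact hmemB
    · rw [hMdef, h]; exact hmemF
  have hgreat : IsGreatest {t : ℝ | ∃ x y : ℝ, |x| + |y| ≤ 1 ∧
      t = |a * x^2 + b * y^2 + c * (x * y)|} M := by
    refine ⟨hMmem, ?_⟩
    rintro t ⟨x, y, hxy, rfl⟩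
    exact hub x y hxy
  rw [hgreat.csSup_eq]
  constructor
  · intro hM
    have hF1 : F = 1 := by
      rcases le_or_gt F (max |a| |b|) with hle | hlt
      · rw [hMdef] at hM
        rw [max_eq_left hle] at hM
        have : max |a| |b| < 1 := max_lt ha hb
        linarith
      · rw [hMdef, max_eq_right hlt.le] at hM
        exact hM
    rw [hF1, mul_one] at hFeq
    nlinarith [hFeq, hdc]
  · intro h
    have hF1 : F = 1 := by
      have h2 : 4 * (d - |a + b|) * F = 4 * (d - |a + b|) * 1 := by
        rw [hFeq]; nlinarith [hdc]
      exact mul_left_cancel₀ (by positivity) h2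
    rw [hMdef, hF1]
    exact max_eq_right (max_lt ha hb).le
end

section
/- For a sequence z = (z_j) of complex numbers, the family {z^α : α ∈ ℕ^(ℕ), α has finite support} is absolutely summable (i.e., Σ_α |z^α| < ∞ where z^α = Π_j z_j^{α_j}) if and only if Σ_j |z_j| < ∞ and |z_j| < 1 for every j. -/
open Finset Real

/-- Matos: for a complex sequence z, the monomials (z^α) over finitely
supported multi-indices are absolutely summable iff z ∈ ℓ₁ and |z_j| < 1
for every j. -/
theorem stmt8 (z : ℕ → ℂ) :
    Summable (fun α : ℕ →₀ ℕ => ‖α.prod fun j k => z j ^ k‖) ↔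
      (Summable fun j => ‖z j‖) ∧ ∀ j, ‖z j‖ < 1 := by
  set r : ℕ → ℝ := fun j => ‖z j‖ with hrdef
  have hr0 : ∀ j, 0 ≤ r j := fun j => norm_nonneg _
  have hf : (fun α : ℕ →₀ ℕ => ‖α.prod fun j k => z j ^ k‖)
      = fun α : ℕ →₀ ℕ => α.prod fun j k => r j ^ k := by
    funext α
    rw [Finsupp.prod, Finsupp.prod, norm_prod]
    exact Finset.prod_congr rfl fun j _ => norm_pow _ _
  rw [hf]
  constructor
  · intro h
    constructor
    · have h1 := h.comp_injective (Finsupp.single_left_injective (one_ne_zero (α := ℕ)))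
      refine h1.congr fun j => ?_
      simp [Function.comp, Finsupp.prod_single_index, hrdef]
    · intro j
      have h2 := h.comp_injective (Finsupp.single_injective j)
      have h3 : Summable fun k : ℕ => r j ^ k := by
        refine h2.congr fun k => ?_
        simp [Function.comp, Finsupp.prod_single_index]
      have := summable_geometric_iff_norm_lt_one.mp h3
      rwa [Real.norm_of_nonneg (hr0 j)] at this
  · rintro ⟨hs, hlt⟩
    -- uniform bound a < 1 on r
    obtain ⟨a, ha1, har⟩ : ∃ a : ℝ, a < 1 ∧ ∀ j, r j ≤ a := by
      have hev : ∀ᶠ j in Filter.atTop, r j < 1 / 2 :=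
        hs.tendsto_atTop_zero.eventually_lt_const (by norm_num)
      obtain ⟨N, hN⟩ := Filter.eventually_atTop.mp hev
      set s : Finset ℝ := insert (1 / 2) ((Finset.range N).image r) with hsdef
      have hne : s.Nonempty := ⟨1 / 2, Finset.mem_insert_self _ _⟩
      refine ⟨s.max' hne, ?_, ?_⟩
      · have := s.max'_mem hne
        rcases Finset.mem_insert.mp this with h | h
        · rw [h]; norm_num
        · obtain ⟨j, _, hj⟩ := Finset.mem_image.mp h
          rw [← hj]; exact hlt j
      · intro j
        rcases lt_or_ge j N with hj | hj
        · exact Finset.le_max' s _ (Finset.mem_insert_of_mem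
            (Finset.mem_image.mpr ⟨j, Finset.mem_range.mpr hj, rfl⟩))
        · exact (hN j hj).le.trans (Finset.le_max' s _ (Finset.mem_insert_self _ _))
    have ha0 : 0 < 1 - a := by linarith
    set c : ℕ → ℝ := fun j => (1 - a)⁻¹ * r j with hcdef
    have hc0 : ∀ j, 0 ≤ c j := fun j => mul_nonneg (by positivity) (hr0 j)
    have hcs : Summable c := hs.mul_left _
    set Q : ℝ := ∑' j, c j with hQdef
    -- each (1 - r j)⁻¹ ≤ exp (c j)
    have hrj1 : ∀ j, 0 < 1 - r j := fun j => by have := hlt j; linarith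
    have hkey : ∀ j, (1 - r j)⁻¹ ≤ Real.exp (c j) := by
      intro j
      have h1 : (1 - r j)⁻¹ = 1 + (1 - r j)⁻¹ * r j := by
        have h0 := inv_mul_cancel₀ (hrj1 j).ne'
        linear_combination h0
      have h2 : (1 - r j)⁻¹ * r j ≤ c j := by
        refine mul_le_mul_of_nonneg_right ?_ (hr0 j)
        exact inv_anti₀ ha0 (by have := har j; linarith)
      calc (1 - r j)⁻¹ = 1 + (1 - r j)⁻¹ * r j := h1
        _ ≤ 1 + c j := by linarith
        _ = c j + 1 := by ring
        _ ≤ Real.exp (c j) := Real.add_one_le_exp _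
    -- main summability via bounded partial sums
    refine summable_of_sum_le (c := Real.exp Q) (fun α => by
      rw [Finsupp.prod]; exact Finset.prod_nonneg fun j _ => pow_nonneg (hr0 j) _) ?_
    intro S
    classical
    set T : Finset ℕ := S.sup Finsupp.support with hTdef
    set N : ℕ := S.sup fun α => α.support.sup α with hNdef
    have hsupp : ∀ α ∈ S, α.support ⊆ T := fun α hα => Finset.le_sup hα
    have hbound : ∀ α ∈ S, ∀ j, α j < N + 1 := by
      intro α hα j
      by_cases hj : j ∈ α.support
      · exact Nat.lt_succ_of_le ((Finset.le_sup hj).trans (Finset.le_sup (f := fun α : ℕ →₀ ℕ => α.support.sup α) hα))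
      · simp [Finsupp.notMem_support_iff.mp hj]
    have step1 : ∀ α ∈ S, (α.prod fun j k => r j ^ k) = ∏ j ∈ T, r j ^ α j := by
      intro α hα
      exact Finsupp.prod_of_support_subset α (hsupp α hα) _ fun j _ => pow_zero _
    rw [Finset.sum_congr rfl step1]
    -- inject S into the pi-set
    set g : (∀ j ∈ T, ℕ) → ℝ := fun p => ∏ x ∈ T.attach, r x.1 ^ p x.1 x.2 with hgdef
    set emb : (ℕ →₀ ℕ) → (∀ j ∈ T, ℕ) := fun α j _ => α j with hembdef
    have hg : ∀ α ∈ S, (∏ j ∈ T, r j ^ α j) = g (emb α) := by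
      intro α hα
      rw [hgdef]
      exact (Finset.prod_attach T fun j => r j ^ α j).symm
    rw [Finset.sum_congr rfl hg]
    have hinj : Set.InjOn emb S := by
      intro α hα β hβ hab
      ext j
      by_cases hj : j ∈ T
      · exact congrFun (congrFun hab j) hj
      · rw [Finsupp.notMem_support_iff.mp (fun h => hj (hsupp α hα h)),
          Finsupp.notMem_support_iff.mp (fun h => hj (hsupp β hβ h))]
    have hmaps : ∀ α ∈ S, emb α ∈ T.pi fun _ => Finset.range (N + 1) := by
      intro α hα
      rw [Finset.mem_pi]
      exact fun j hj => Finset.mem_range.mpr (hbound α hα j)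
    have hsub : S.image emb ⊆ T.pi fun _ => Finset.range (N + 1) := by
      intro p hp
      obtain ⟨α, hα, hpe⟩ := Finset.mem_image.mp hp
      exact hpe ▸ hmaps α hα
    have hgnn : ∀ p, 0 ≤ g p := fun p =>
      Finset.prod_nonneg fun x _ => pow_nonneg (hr0 x.1) _
    calc ∑ α ∈ S, g (emb α)
        = ∑ p ∈ S.image emb, g p := (Finset.sum_image fun x hx y hy h => hinj hx hy h).symm
      _ ≤ ∑ p ∈ T.pi fun _ => Finset.range (N + 1), g p :=
          Finset.sum_le_sum_of_subset_of_nonneg hsub fun p _ _ => hgnn p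
      _ = ∏ j ∈ T, ∑ k ∈ Finset.range (N + 1), r j ^ k :=
          (Finset.prod_sum T (fun _ => Finset.range (N + 1)) fun j k => r j ^ k).symm
      _ ≤ ∏ j ∈ T, (1 - r j)⁻¹ := by
          refine Finset.prod_le_prod (fun j _ => Finset.sum_nonneg fun k _ =>
            pow_nonneg (hr0 j) k) fun j _ => ?_
          rw [← tsum_geometric_of_lt_one (hr0 j) (hlt j)]
          exact Summable.sum_le_tsum _ (fun k _ => pow_nonneg (hr0 j) k)
            (summable_geometric_of_lt_one (hr0 j) (hlt j))
      _ ≤ ∏ j ∈ T, Real.exp (c j) :=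
          Finset.prod_le_prod (fun j _ => (inv_pos.mpr (hrj1 j)).le) fun j _ => hkey j
      _ = Real.exp (∑ j ∈ T, c j) := (Real.exp_sum T c).symm
      _ ≤ Real.exp Q := by
          exact Real.exp_le_exp.mpr (Summable.sum_le_tsum T (fun j _ => hc0 j) hcs)
end

section
/- Let (Pₘ)ₘ be a sequence of m-homogeneous polynomials on a Banach space with norms ‖·‖ ≤ ‖·‖_r, and suppose there exist Kₘ ∈ (0,1] with Kₘᵐ ‖Pₘ‖_r ≤ ‖Pₘ‖ for all m. Then (liminf_m Kₘ) · (limsup_m ‖Pₘ‖^{1/m})^{−1} ≤ (limsup_m ‖Pₘ‖_r^{1/m})^{−1} ≤ (limsup_m ‖Pₘ‖^{1/m})^{−1}. -/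
open Filter

theorem stmt15_key (nP nr K : ℕ → ENNReal)
    (h : ∀ m, 1 ≤ m → K m ^ m * nr m ≤ nP m) :
    ∀ᶠ m in atTop, K m * nr m ^ (1 / (m : ℝ)) ≤ nP m ^ (1 / (m : ℝ)) := by
  filter_upwards [eventually_ge_atTop 1] with m hm
  have hm0 : (m : ℝ) ≠ 0 := Nat.cast_ne_zero.2 (by omega)
  have := ENNReal.rpow_le_rpow (h m hm) (by positivity : (0:ℝ) ≤ 1 / m)
  rwa [ENNReal.mul_rpow_of_nonneg _ _ (by positivity), ← ENNReal.rpow_natCast (K m) m,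
    ← ENNReal.rpow_mul, mul_one_div, div_self hm0, ENNReal.rpow_one] at this

/-- Main inequality of Theorem 5.3, in [0,∞] with the conventions 1/0 = ∞ and
1/∞ = 0: if ‖Pₘ‖ ≤ ‖Pₘ‖_r and Kₘᵐ‖Pₘ‖_r ≤ ‖Pₘ‖ with Kₘ ∈ (0,1], then
liminf Kₘ · r(f,0) ≤ |r|(f,0) ≤ r(f,0), where r(f,0) = (limsup ‖Pₘ‖^{1/m})⁻¹
and |r|(f,0) = (limsup ‖Pₘ‖_r^{1/m})⁻¹. -/
theorem stmt15 (nP nr K : ℕ → ENNReal)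
    (hab : ∀ m, 1 ≤ m → nP m ≤ nr m)
    (hK0 : ∀ m, 1 ≤ m → 0 < K m) (hK1 : ∀ m, 1 ≤ m → K m ≤ 1)
    (h : ∀ m, 1 ≤ m → K m ^ m * nr m ≤ nP m) :
    liminf K atTop * (limsup (fun m => nP m ^ (1 / (m : ℝ))) atTop)⁻¹ ≤
        (limsup (fun m => nr m ^ (1 / (m : ℝ))) atTop)⁻¹ ∧
      (limsup (fun m => nr m ^ (1 / (m : ℝ))) atTop)⁻¹ ≤
        (limsup (fun m => nP m ^ (1 / (m : ℝ))) atTop)⁻¹ := by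
  set A := limsup (fun m => nP m ^ (1 / (m : ℝ))) atTop with hA
  set B := limsup (fun m => nr m ^ (1 / (m : ℝ))) atTop with hB
  set L := liminf K atTop with hL
  have hkey : L * B ≤ A := by
    calc L * B = B * L := mul_comm _ _
    _ ≤ limsup (fun m => nr m ^ (1 / (m : ℝ)) * K m) atTop := ENNReal.le_limsup_mul
    _ ≤ A := by
        refine limsup_le_limsup ?_
        filter_upwards [stmt15_key nP nr K h] with m hm
        rwa [mul_comm]
    ;
  have hAB : A ≤ B := by
    refine limsup_le_limsup ?_
    filter_upwards [eventually_ge_atTop 1] with m hm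
    exact ENNReal.rpow_le_rpow (hab m hm) (by positivity)
  refine ⟨?_, ENNReal.inv_le_inv.2 hAB⟩
  rw [mul_comm, ENNReal.le_inv_iff_mul_le]
  calc A⁻¹ * L * B = A⁻¹ * (L * B) := by ring
  _ ≤ A⁻¹ * A := by exact mul_le_mul_right hkey _
  _ ≤ 1 := by rw [mul_comm]; exact ENNReal.mul_inv_le_one A
end
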